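/- arXiv:2407.16683 — 2 statements merged into one kernel-verified Lean document; each statement's English description precedes it below -/
import Mathlib

section
/- In the Gödel logic G_{V_↑}, every L-sentence has a logically equivalent prenex L-sentence: for every sentence A there is a prenex sentence P with I(A)=I(P) for all V_↑-interpretations I. -/
namespace GodelPaper

/-- A first-order language: function and relation symbols of each arity. -/
structure Lang where
  Func : ℕ → Type
  Rel : ℕ → Type

/-- A Gödel set: a closed subset of [0,1] containing 0 and 1. -/
def GodelSet (V : Set ℝ) : Prop :=
  IsClosed V ∧ V ⊆ Set.Icc 0 1 ∧ (0:ℝ) ∈ V ∧ (1:ℝ) ∈ V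

/-- Terms with variables from `α`. -/
inductive Term (L : Lang) (α : Type) : Type
  | var : α → Term L α
  | func : ∀ {k}, L.Func k → (Fin k → Term L α) → Term L α

/-- A `V`-interpretation: nonempty domain, interpretation of function symbols,
and truth values in `V` for atomic sentences with parameters. -/
structure Interp (L : Lang) (V : Set ℝ) where
  Dom : Type
  dom_nonempty : Nonempty Dom
  funMap : ∀ {k}, L.Func k → (Fin k → Dom) → Dom
  relVal : ∀ {k}, L.Rel k → (Fin k → Dom) → ℝ
  relVal_mem : ∀ {k} (R : L.Rel k) (v : Fin k → Dom), relVal R v ∈ V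

def Term.eval {L : Lang} {V : Set ℝ} (I : Interp L V) {α : Type} (v : α → I.Dom) :
    Term L α → I.Dom
  | .var i => v i
  | .func f ts => I.funMap f fun j => Term.eval I v (ts j)

/-- Formulas of the Δ-extended language, with free variables among `Fin n`.
The quantifiers bind the *last* variable. Δ-free formulas (i.e. formulas of the
plain language) are singled out by the predicate `DeltaFree` below. -/
inductive Form (L : Lang) : ℕ → Type
  | falsum : ∀ {n}, Form L n
  | atom : ∀ {n k}, L.Rel k → (Fin k → Term L (Fin n)) → Form L n
  | conj : ∀ {n}, Form L n → Form L n → Form L n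
  | disj : ∀ {n}, Form L n → Form L n → Form L n
  | impl : ∀ {n}, Form L n → Form L n → Form L n
  | delta : ∀ {n}, Form L n → Form L n
  | all : ∀ {n}, Form L (n+1) → Form L n
  | ex : ∀ {n}, Form L (n+1) → Form L n

/-- The Gödel truth value of a formula under an interpretation and an
assignment of the free variables. -/
noncomputable def Form.val {L : Lang} {V : Set ℝ} (I : Interp L V) :
    ∀ {n}, Form L n → (Fin n → I.Dom) → ℝ
  | _, .falsum, _ => 0
  | _, .atom R ts, ρ => I.relVal R fun j => Term.eval I ρ (ts j)
  | _, .conj A B, ρ => min (Form.val I A ρ) (Form.val I B ρ)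
  | _, .disj A B, ρ => max (Form.val I A ρ) (Form.val I B ρ)
  | _, .impl A B, ρ => if Form.val I A ρ ≤ Form.val I B ρ then 1 else Form.val I B ρ
  | _, .delta A, ρ => if Form.val I A ρ = 1 then 1 else 0
  | _, .all A, ρ => sInf {v : ℝ | ∃ d : I.Dom, v = Form.val I A (Fin.snoc ρ d)}
  | _, .ex A, ρ => sSup {v : ℝ | ∃ d : I.Dom, v = Form.val I A (Fin.snoc ρ d)}

/-- The value of a sentence. -/
noncomputable def Form.sval {L : Lang} {V : Set ℝ} (I : Interp L V) (A : Form L 0) : ℝ :=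
  Form.val I A Fin.elim0

/-- `A` is valid in `G_V`. -/
def Valid {L : Lang} (V : Set ℝ) (A : Form L 0) : Prop :=
  ∀ I : Interp L V, Form.sval I A = 1

/-- `A` is 1-satisfiable in `G_V`. -/
def OneSat {L : Lang} (V : Set ℝ) (A : Form L 0) : Prop :=
  ∃ I : Interp L V, Form.sval I A = 1

/-- `A` is classically satisfiable: it takes value 1 under a `V`-interpretation
assigning only values in {0,1} to atomic sentences. -/
def ClassSat {L : Lang} (V : Set ℝ) (A : Form L 0) : Prop :=
  ∃ I : Interp L V,
    (∀ {k : ℕ} (R : L.Rel k) (v : Fin k → I.Dom), I.relVal R v = 0 ∨ I.relVal R v = 1) ∧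
    Form.sval I A = 1

/-- ¬A abbreviates A ⊃ ⊥. -/
def Form.not {L : Lang} {n : ℕ} (A : Form L n) : Form L n := Form.impl A Form.falsum

/-- A ↔ B abbreviates (A ⊃ B) ∧ (B ⊃ A). -/
def Form.iff {L : Lang} {n : ℕ} (A B : Form L n) : Form L n :=
  Form.conj (Form.impl A B) (Form.impl B A)

/-- Formulas of the plain language (no Δ). -/
def DeltaFree {L : Lang} : ∀ {n}, Form L n → Prop
  | _, .falsum => True
  | _, .atom _ _ => True
  | _, .conj A B => DeltaFree A ∧ DeltaFree B
  | _, .disj A B => DeltaFree A ∧ DeltaFree B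
  | _, .impl A B => DeltaFree A ∧ DeltaFree B
  | _, .delta _ => False
  | _, .all A => DeltaFree A
  | _, .ex A => DeltaFree A

/-- Quantifier-free formulas. -/
def QuantFree {L : Lang} : ∀ {n}, Form L n → Prop
  | _, .falsum => True
  | _, .atom _ _ => True
  | _, .conj A B => QuantFree A ∧ QuantFree B
  | _, .disj A B => QuantFree A ∧ QuantFree B
  | _, .impl A B => QuantFree A ∧ QuantFree B
  | _, .delta A => QuantFree A
  | _, .all _ => False
  | _, .ex _ => False

/-- Formulas containing no universal quantifier. -/
def AllFree {L : Lang} : ∀ {n}, Form L n → Prop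
  | _, .falsum => True
  | _, .atom _ _ => True
  | _, .conj A B => AllFree A ∧ AllFree B
  | _, .disj A B => AllFree A ∧ AllFree B
  | _, .impl A B => AllFree A ∧ AllFree B
  | _, .delta A => AllFree A
  | _, .all _ => False
  | _, .ex A => AllFree A

/-- Prenex formulas: a block of quantifiers followed by a quantifier-free matrix. -/
inductive IsPrenex {L : Lang} : ∀ {n}, Form L n → Prop
  | qf {n} {A : Form L n} : QuantFree A → IsPrenex A
  | all {n} {A : Form L (n+1)} : IsPrenex A → IsPrenex (Form.all A)
  | ex {n} {A : Form L (n+1)} : IsPrenex A → IsPrenex (Form.ex A)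

/-- Purely existential prenex formulas. -/
inductive ExPrenex {L : Lang} : ∀ {n}, Form L n → Prop
  | qf {n} {A : Form L n} : QuantFree A → ExPrenex A
  | ex {n} {A : Form L (n+1)} : ExPrenex A → ExPrenex (Form.ex A)

/-- The glued interpretation `I_ω`: atoms with value ≤ ω keep their value,
all other atoms get value 1. Same domain and function interpretations. -/
noncomputable def Interp.glue {L : Lang} {V : Set ℝ} (I : Interp L V) (ω : ℝ)
    (h1 : (1:ℝ) ∈ V) : Interp L V where
  Dom := I.Dom
  dom_nonempty := I.dom_nonempty
  funMap := fun {k} f v => I.funMap f v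
  relVal := fun {k} R v => if I.relVal R v ≤ ω then I.relVal R v else 1
  relVal_mem := fun {k} R v => by
    by_cases h : I.relVal R v ≤ ω
    · simpa [h] using I.relVal_mem R v
    · simpa [h] using h1

/-- The Gödel set `V_↑ = {1 - 1/k : k ≥ 1} ∪ {1}`. -/
def Vup : Set ℝ := {x : ℝ | ∃ k : ℕ, 1 ≤ k ∧ x = 1 - 1/(k:ℝ)} ∪ {1}

/-- The `m`-element Gödel set `V_m = {1 - 1/k : 1 ≤ k ≤ m-1} ∪ {1}`. -/
def Vfin (m : ℕ) : Set ℝ :=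
  {x : ℝ | ∃ k : ℕ, 1 ≤ k ∧ k ≤ m - 1 ∧ x = 1 - 1/(k:ℝ)} ∪ {1}

/-- Atomic formula built from a unary predicate. -/
def atom1 {L : Lang} (P : L.Rel 1) {n : ℕ} (t : Term L (Fin n)) : Form L n :=
  Form.atom P fun _ => t

/-- Atomic formula built from a 0-ary predicate (propositional atom). -/
def atom0 {L : Lang} (X : L.Rel 0) {n : ℕ} : Form L n :=
  Form.atom X fun i => i.elim0

def Term.rename {L : Lang} {α β : Type} (f : α → β) : Term L α → Term L β
  | .var i => .var (f i)
  | .func g ts => .func g fun j => Term.rename f (ts j)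

def Form.rename {L : Lang} : ∀ {m n}, (Fin m → Fin n) → Form L m → Form L n
  | _, _, _, .falsum => .falsum
  | _, _, f, .atom R ts => .atom R fun j => (ts j).rename f
  | _, _, f, .conj A B => .conj (A.rename f) (B.rename f)
  | _, _, f, .disj A B => .disj (A.rename f) (B.rename f)
  | _, _, f, .impl A B => .impl (A.rename f) (B.rename f)
  | _, _, f, .delta A => .delta (A.rename f)
  | _, _, f, .all A =>
      .all (A.rename (Fin.lastCases (Fin.last _) fun i => Fin.castSucc (f i)))
  | _, _, f, .ex A =>
      .ex (A.rename (Fin.lastCases (Fin.last _) fun i => Fin.castSucc (f i)))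

/-- Weakening: regard a formula with `n` free variables as one with `n+1`
free variables (not using the new last variable). -/
def Form.lift {L : Lang} {n : ℕ} (A : Form L n) : Form L (n+1) :=
  A.rename Fin.castSucc

def Term.subst {L : Lang} {α β : Type} (σ : α → Term L β) : Term L α → Term L β
  | .var i => σ i
  | .func g ts => .func g fun j => Term.subst σ (ts j)

def Form.subst {L : Lang} : ∀ {m n}, (Fin m → Term L (Fin n)) → Form L m → Form L n
  | _, _, _, .falsum => .falsum
  | _, _, σ, .atom R ts => .atom R fun j => (ts j).subst σ
  | _, _, σ, .conj A B => .conj (A.subst σ) (B.subst σ)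
  | _, _, σ, .disj A B => .disj (A.subst σ) (B.subst σ)
  | _, _, σ, .impl A B => .impl (A.subst σ) (B.subst σ)
  | _, _, σ, .delta A => .delta (A.subst σ)
  | _, _, σ, .all A =>
      .all (A.subst (Fin.lastCases (.var (Fin.last _))
        fun i => (σ i).rename Fin.castSucc))
  | _, _, σ, .ex A =>
      .ex (A.subst (Fin.lastCases (.var (Fin.last _))
        fun i => (σ i).rename Fin.castSucc))

/-- The language `L ∪ {f}` with one new function symbol of arity `a`. -/
def Lang.addFunc (L : Lang) (a : ℕ) : Lang where
  Func := fun k => L.Func k ⊕ PLift (k = a)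
  Rel := L.Rel

/-- The new function symbol of `L.addFunc a`. -/
def newFunc (L : Lang) (a : ℕ) : (L.addFunc a).Func a := Sum.inr ⟨rfl⟩

def Term.emb {L : Lang} {a : ℕ} {α : Type} : Term L α → Term (L.addFunc a) α
  | .var i => .var i
  | .func g ts => .func (Sum.inl g) fun j => Term.emb (ts j)

/-- Embedding of `L`-formulas into the language with the extra function symbol. -/
def Form.emb {L : Lang} {a : ℕ} : ∀ {n}, Form L n → Form (L.addFunc a) n
  | _, .falsum => .falsum
  | _, .atom R ts => .atom R fun j => (ts j).emb
  | _, .conj A B => .conj A.emb B.emb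
  | _, .disj A B => .disj A.emb B.emb
  | _, .impl A B => .impl A.emb B.emb
  | _, .delta A => .delta A.emb
  | _, .all A => .all A.emb
  | _, .ex A => .ex A.emb

/-- Prefix of `n` existential quantifiers (outermost quantifier binds variable 0). -/
def Form.exN {L : Lang} : ∀ n, Form L n → Form L 0
  | 0, A => A
  | n+1, A => Form.exN n (Form.ex A)

/-- Prefix of `n` universal quantifiers (outermost quantifier binds variable 0). -/
def Form.allN {L : Lang} : ∀ n, Form L n → Form L 0
  | 0, A => A
  | n+1, A => Form.allN n (Form.all A)

/-!
In `V_↑` the only accumulation point is `1`, so every infimum of truth values is attained and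
every supremum is either attained or equal to `1`. Attained extrema commute with the monotone or
antitone truth functions of `∧`, `∨` and `⊃`; together with continuity of `min` and `max` this
validates all classical quantifier-shifting laws, including `(∀x A ⊃ B) ≡ ∃x (A ⊃ B)` and
`(A ⊃ ∃x B) ≡ ∃x (A ⊃ B)`, which fail over `[0,1]`. Pulling the quantifiers of already prenex
arguments out of each connective, one at a time, then gives a prenex form.
-/

open Set

section Vup

lemma vup_subset_Icc : Vup ⊆ Icc 0 1 := by
  rintro x (⟨k, hk, rfl⟩ | rfl)
  · have hk : (1 : ℝ) ≤ k := by exact_mod_cast hk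
    have h₀ : 0 < 1 / (k : ℝ) := by positivity
    have h₁ : 1 / (k : ℝ) ≤ 1 := by rwa [div_le_one (by linarith)]
    exact ⟨by linarith, by linarith⟩
  · simp

lemma zero_mem_vup : (0 : ℝ) ∈ Vup := Or.inl ⟨1, le_rfl, by norm_num⟩

lemma one_mem_vup : (1 : ℝ) ∈ Vup := Or.inr rfl

lemma finite_vup_inter_Iic {c : ℝ} (hc : c < 1) : (Vup ∩ Iic c).Finite := by
  refine ((finite_Iic ⌈1 / (1 - c)⌉₊).image fun k : ℕ => 1 - 1 / (k : ℝ)).subset ?_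
  rintro x ⟨⟨k, hk, rfl⟩ | rfl, hx⟩
  · refine ⟨k, ?_, rfl⟩
    have hk : (0 : ℝ) < k := by exact_mod_cast hk
    have : (k : ℝ) ≤ 1 / (1 - c) :=
      (le_one_div (by linarith) hk).1 (by linarith [mem_Iic.1 hx])
    exact_mod_cast this.trans (Nat.le_ceil _)
  · exact absurd hx (not_le.2 hc)

lemma isLeast_csInf_of_subset_vup {S : Set ℝ} (hS : S ⊆ Vup) (hne : S.Nonempty) :
    IsLeast S (sInf S) := by
  have hbdd : BddBelow S := ⟨0, fun x hx => (vup_subset_Icc (hS hx)).1⟩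
  refine ⟨?_, fun x hx => csInf_le hbdd hx⟩
  by_cases h : ∃ s ∈ S, s < 1
  · obtain ⟨s, hs, hs1⟩ := h
    have hT : (S ∩ Iic s).Finite :=
      (finite_vup_inter_Iic hs1).subset (inter_subset_inter_left _ hS)
    have hmem := (show (S ∩ Iic s).Nonempty from ⟨s, hs, mem_Iic.2 le_rfl⟩).csInf_mem hT
    have hleast : IsLeast S (sInf (S ∩ Iic s)) := by
      refine ⟨hmem.1, fun x hx => ?_⟩
      rcases le_total x s with hxs | hsx
      · exact csInf_le (hbdd.mono inter_subset_left) ⟨hx, hxs⟩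
      · exact hmem.2.trans hsx
    rw [hleast.csInf_eq]
    exact hmem.1
  · push Not at h
    have hS1 : S = {1} := (eq_singleton_iff_nonempty_unique_mem.2
      ⟨hne, fun x hx => le_antisymm (vup_subset_Icc (hS hx)).2 (h x hx)⟩)
    simp [hS1]

lemma isGreatest_csSup_or_csSup_eq_one_of_subset_vup {S : Set ℝ} (hS : S ⊆ Vup)
    (hne : S.Nonempty) : IsGreatest S (sSup S) ∨ sSup S = 1 := by
  have hbdd : BddAbove S := ⟨1, fun x hx => (vup_subset_Icc (hS hx)).2⟩
  refine or_iff_not_imp_right.2 fun h1 => ⟨hne.csSup_mem ?_, fun x hx => le_csSup hbdd hx⟩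
  have hlt : sSup S < 1 := (csSup_le hne fun x hx => (vup_subset_Icc (hS hx)).2).lt_of_ne h1
  exact (finite_vup_inter_Iic hlt).subset fun x hx => ⟨hS hx, le_csSup hbdd hx⟩

end Vup

section Extrema

variable {α β ι : Type*} [ConditionallyCompleteLattice α] [ConditionallyCompleteLattice β]
  {g : α → β} {f : ι → α} {m : α}

lemma Monotone.ciInf_comp_of_isLeast (hg : Monotone g) (hm : IsLeast (range f) m) :
    ⨅ i, g (f i) = g m := by
  rw [← (hg.map_isLeast hm).csInf_eq, ← range_comp]
  rfl

lemma Antitone.ciSup_comp_of_isLeast (hg : Antitone g) (hm : IsLeast (range f) m) :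
    ⨆ i, g (f i) = g m := by
  rw [← (hg.map_isLeast hm).csSup_eq, ← range_comp]
  rfl

lemma Monotone.ciSup_comp_of_isGreatest (hg : Monotone g) (hm : IsGreatest (range f) m) :
    ⨆ i, g (f i) = g m := by
  rw [← (hg.map_isGreatest hm).csSup_eq, ← range_comp]
  rfl

end Extrema

section GodelImp

noncomputable def godelImp (a b : ℝ) : ℝ := if a ≤ b then 1 else b

variable {a b : ℝ}

lemma godelImp_of_le (h : a ≤ b) : godelImp a b = 1 := if_pos h

lemma godelImp_of_lt (h : b < a) : godelImp a b = b := if_neg (not_le.2 h)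

lemma le_godelImp (hb : b ≤ 1) : b ≤ godelImp a b := by
  unfold godelImp; split_ifs <;> [exact hb; exact le_rfl]

lemma godelImp_le_one (hb : b ≤ 1) : godelImp a b ≤ 1 := by
  unfold godelImp; split_ifs <;> [exact le_rfl; exact hb]

lemma godelImp_antitone_left (hb : b ≤ 1) : Antitone (godelImp · b) := by
  intro x y hxy
  dsimp only
  rcases le_or_gt y b with hy | hy
  · rw [godelImp_of_le hy, godelImp_of_le (hxy.trans hy)]
  · rw [godelImp_of_lt hy]
    exact le_godelImp hb

lemma godelImp_monotone_right (ha : a ≤ 1) : Monotone (godelImp a) := by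
  intro x y hxy
  rcases le_or_gt a x with hx | hx
  · rw [godelImp_of_le hx, godelImp_of_le (hx.trans hxy)]
  · rw [godelImp_of_lt hx]
    rcases le_or_gt a y with hy | hy
    · rw [godelImp_of_le hy]
      exact (hx.trans_le ha).le
    · rwa [godelImp_of_lt hy]

variable {ι : Type*} [Nonempty ι] {f : ι → ℝ}

lemma ciInf_godelImp_const (hf : BddAbove (range f)) (hb : b ≤ 1) :
    ⨅ i, godelImp (f i) b = godelImp (⨆ i, f i) b := by
  rcases le_or_gt (⨆ i, f i) b with h | h
  · have hle : ∀ i, f i ≤ b := fun i => (le_ciSup hf i).trans h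
    simp only [godelImp_of_le (hle _), godelImp_of_le h, ciInf_const]
  · obtain ⟨i, hi⟩ := exists_lt_of_lt_ciSup h
    rw [godelImp_of_lt h]
    refine le_antisymm ?_ (le_ciInf fun _ => le_godelImp hb)
    calc ⨅ j, godelImp (f j) b ≤ godelImp (f i) b :=
          ciInf_le ⟨b, forall_mem_range.2 fun _ => le_godelImp hb⟩ i
      _ = b := godelImp_of_lt hi

lemma ciSup_const_godelImp (ha : a ≤ 1) (hf : ∀ i, f i ≤ 1)
    (hsup : IsGreatest (range f) (⨆ i, f i) ∨ ⨆ i, f i = 1) :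
    ⨆ i, godelImp a (f i) = godelImp a (⨆ i, f i) := by
  rcases hsup with hsup | hsup
  · exact Monotone.ciSup_comp_of_isGreatest (godelImp_monotone_right ha) hsup
  · rw [hsup, godelImp_of_le ha]
    refine le_antisymm (ciSup_le fun i => godelImp_le_one (hf i)) ?_
    calc (1 : ℝ) = ⨆ i, f i := hsup.symm
      _ ≤ ⨆ i, godelImp a (f i) :=
        ciSup_mono ⟨1, forall_mem_range.2 fun i => godelImp_le_one (hf i)⟩
          fun i => le_godelImp (hf i)

end GodelImp

instance {L : Lang} {V : Set ℝ} (I : Interp L V) : Nonempty I.Dom := I.dom_nonempty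

namespace Form

variable {L : Lang} {V : Set ℝ} (I : Interp L V) {n : ℕ}

lemma val_conj (A B : Form L n) (ρ : Fin n → I.Dom) :
    (A.conj B).val I ρ = min (A.val I ρ) (B.val I ρ) := rfl

lemma val_disj (A B : Form L n) (ρ : Fin n → I.Dom) :
    (A.disj B).val I ρ = max (A.val I ρ) (B.val I ρ) := rfl

lemma val_impl (A B : Form L n) (ρ : Fin n → I.Dom) :
    (A.impl B).val I ρ = godelImp (A.val I ρ) (B.val I ρ) := rfl

lemma val_all (A : Form L (n + 1)) (ρ : Fin n → I.Dom) :
    A.all.val I ρ = ⨅ d, A.val I (Fin.snoc ρ d) := by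
  rw [Form.val, iInf, range]
  simp only [eq_comm]

lemma val_ex (A : Form L (n + 1)) (ρ : Fin n → I.Dom) :
    A.ex.val I ρ = ⨆ d, A.val I (Fin.snoc ρ d) := by
  rw [Form.val, iSup, range]
  simp only [eq_comm]

end Form

lemma Term.eval_rename {L : Lang} {V : Set ℝ} (I : Interp L V) {α β : Type} (f : α → β)
    (v : β → I.Dom) : ∀ t : Term L α, (t.rename f).eval I v = t.eval I (v ∘ f)
  | .var _ => rfl
  | .func g ts => by
    simp only [Term.rename, Term.eval, Term.eval_rename I f v]

lemma Fin.snoc_comp_lastCases {D : Type} {m n : ℕ} (f : Fin m → Fin n) (ρ : Fin n → D) (d : D) :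
    (Fin.snoc ρ d : Fin (n + 1) → D) ∘ Fin.lastCases (Fin.last n) (Fin.castSucc ∘ f)
      = Fin.snoc (ρ ∘ f) d := by
  funext x
  refine Fin.lastCases ?_ (fun i => ?_) x <;> simp

namespace Form

variable {L : Lang}

lemma val_rename {V : Set ℝ} (I : Interp L V) {m n : ℕ} (f : Fin m → Fin n) (A : Form L m)
    (ρ : Fin n → I.Dom) : (A.rename f).val I ρ = A.val I (ρ ∘ f) := by
  induction A generalizing n with
  | falsum => rfl
  | atom R ts => simp only [Form.rename, Form.val, Term.eval_rename]
  | conj A B ihA ihB => simp only [Form.rename, val_conj, ihA, ihB]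
  | disj A B ihA ihB => simp only [Form.rename, val_disj, ihA, ihB]
  | impl A B ihA ihB => simp only [Form.rename, val_impl, ihA, ihB]
  | delta A ih => simp only [Form.rename, Form.val, ih]
  | all A ih => simp only [Form.rename, val_all, ih, ← Fin.snoc_comp_lastCases]; rfl
  | ex A ih => simp only [Form.rename, val_ex, ih, ← Fin.snoc_comp_lastCases]; rfl

lemma val_lift {V : Set ℝ} (I : Interp L V) {n : ℕ} (A : Form L n) (ρ : Fin n → I.Dom)
    (d : I.Dom) : A.lift.val I (Fin.snoc ρ d) = A.val I ρ := by
  rw [lift, val_rename]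
  congr 1
  funext i
  simp

lemma quantFree_rename {m n : ℕ} (f : Fin m → Fin n) {A : Form L m} (hA : QuantFree A) :
    QuantFree (A.rename f) := by
  induction A generalizing n with
  | falsum | atom => trivial
  | conj _ _ ihA ihB | disj _ _ ihA ihB | impl _ _ ihA ihB => exact ⟨ihA f hA.1, ihB f hA.2⟩
  | delta _ ih => exact ih f hA
  | all | ex => exact hA.elim

lemma deltaFree_rename {m n : ℕ} (f : Fin m → Fin n) {A : Form L m} (hA : DeltaFree A) :
    DeltaFree (A.rename f) := by
  induction A generalizing n with
  | falsum | atom => trivial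
  | conj _ _ ihA ihB | disj _ _ ihA ihB | impl _ _ ihA ihB => exact ⟨ihA f hA.1, ihB f hA.2⟩
  | delta => exact hA.elim
  | all _ ih | ex _ ih => exact ih _ hA

end Form

lemma IsPrenex.rename {L : Lang} {m n : ℕ} (f : Fin m → Fin n) {A : Form L m} (hA : IsPrenex A) :
    IsPrenex (A.rename f) := by
  induction hA generalizing n with
  | qf h => exact .qf (Form.quantFree_rename f h)
  | all _ ih => exact .all (ih _)
  | ex _ ih => exact .ex (ih _)

namespace Form

section

variable {L : Lang} (I : Interp L Vup) {n : ℕ}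

lemma val_mem_vup (A : Form L n) (ρ : Fin n → I.Dom) : A.val I ρ ∈ Vup := by
  induction A with
  | falsum => exact zero_mem_vup
  | atom R ts => exact I.relVal_mem R _
  | conj A B ihA ihB =>
    rw [val_conj]
    rcases min_choice (A.val I ρ) (B.val I ρ) with h | h <;> simp only [h, ihA, ihB]
  | disj A B ihA ihB =>
    rw [val_disj]
    rcases max_choice (A.val I ρ) (B.val I ρ) with h | h <;> simp only [h, ihA, ihB]
  | impl A B _ ihB => rw [val_impl, godelImp]; split_ifs; exacts [one_mem_vup, ihB ρ]
  | delta A _ => simp only [Form.val]; split_ifs; exacts [one_mem_vup, zero_mem_vup]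
  | all A ih =>
    have hS : (range fun d => A.val I (Fin.snoc ρ d)) ⊆ Vup := range_subset_iff.2 fun _ => ih _
    rw [val_all]
    exact hS (isLeast_csInf_of_subset_vup hS (range_nonempty _)).1
  | ex A ih =>
    have hS : (range fun d => A.val I (Fin.snoc ρ d)) ⊆ Vup := range_subset_iff.2 fun _ => ih _
    rw [val_ex]
    rcases isGreatest_csSup_or_csSup_eq_one_of_subset_vup hS (range_nonempty _) with h | h
    · exact hS h.1
    · rw [iSup, h]
      exact one_mem_vup

lemma val_le_one (A : Form L n) (ρ : Fin n → I.Dom) : A.val I ρ ≤ 1 :=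
  (vup_subset_Icc (A.val_mem_vup I ρ)).2

lemma isLeast_range_val (A : Form L (n + 1)) (ρ : Fin n → I.Dom) :
    IsLeast (range fun d => A.val I (Fin.snoc ρ d)) (⨅ d, A.val I (Fin.snoc ρ d)) :=
  isLeast_csInf_of_subset_vup (range_subset_iff.2 fun _ => A.val_mem_vup I _) (range_nonempty _)

lemma isGreatest_range_val_or_eq_one (A : Form L (n + 1)) (ρ : Fin n → I.Dom) :
    IsGreatest (range fun d => A.val I (Fin.snoc ρ d)) (⨆ d, A.val I (Fin.snoc ρ d)) ∨
      ⨆ d, A.val I (Fin.snoc ρ d) = 1 :=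
  isGreatest_csSup_or_csSup_eq_one_of_subset_vup
    (range_subset_iff.2 fun _ => A.val_mem_vup I _) (range_nonempty _)

lemma bddAbove_range_val (A : Form L (n + 1)) (ρ : Fin n → I.Dom) :
    BddAbove (range fun d => A.val I (Fin.snoc ρ d)) :=
  ⟨1, forall_mem_range.2 fun _ => A.val_le_one I _⟩

end

variable {L : Lang} {n : ℕ}

def LogEquiv (A B : Form L n) : Prop :=
  ∀ (I : Interp L Vup) (ρ : Fin n → I.Dom), A.val I ρ = B.val I ρ

lemma LogEquiv.trans {A B C : Form L n} (h₁ : LogEquiv A B) (h₂ : LogEquiv B C) :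
    LogEquiv A C := fun I ρ => (h₁ I ρ).trans (h₂ I ρ)

def quant : Bool → Form L (n + 1) → Form L n
  | true, A => A.all
  | false, A => A.ex

lemma LogEquiv.quant (q : Bool) {A B : Form L (n + 1)} (h : LogEquiv A B) :
    LogEquiv (A.quant q) (B.quant q) := by
  intro I ρ
  cases q <;> simp only [Form.quant, val_all, val_ex, h I _]

lemma shift_conj_left (q : Bool) (A : Form L (n + 1)) (B : Form L n) :
    LogEquiv ((A.quant q).conj B) ((A.conj B.lift).quant q) := by
  intro I ρ
  cases q <;> simp only [Form.quant, val_conj, val_all, val_ex, val_lift]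
  · exact Monotone.map_ciSup_of_continuousAt (f := (min · (B.val I ρ))) (by fun_prop)
      (monotone_id.min monotone_const) (bddAbove_range_val I A ρ)
  · exact (Monotone.ciInf_comp_of_isLeast (g := (min · (B.val I ρ)))
      (monotone_id.min monotone_const) (isLeast_range_val I A ρ)).symm

lemma shift_conj_right (q : Bool) (A : Form L n) (B : Form L (n + 1)) :
    LogEquiv (A.conj (B.quant q)) ((A.lift.conj B).quant q) := by
  intro I ρ
  cases q <;> simp only [Form.quant, val_conj, val_all, val_ex, val_lift]
  · exact Monotone.map_ciSup_of_continuousAt (f := min (A.val I ρ)) (by fun_prop)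
      (monotone_const.min monotone_id) (bddAbove_range_val I B ρ)
  · exact (Monotone.ciInf_comp_of_isLeast (g := min (A.val I ρ))
      (monotone_const.min monotone_id) (isLeast_range_val I B ρ)).symm

lemma shift_disj_left (q : Bool) (A : Form L (n + 1)) (B : Form L n) :
    LogEquiv ((A.quant q).disj B) ((A.disj B.lift).quant q) := by
  intro I ρ
  cases q <;> simp only [Form.quant, val_disj, val_all, val_ex, val_lift]
  · exact Monotone.map_ciSup_of_continuousAt (f := (max · (B.val I ρ))) (by fun_prop)
      (monotone_id.max monotone_const) (bddAbove_range_val I A ρ)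
  · exact (Monotone.ciInf_comp_of_isLeast (g := (max · (B.val I ρ)))
      (monotone_id.max monotone_const) (isLeast_range_val I A ρ)).symm

lemma shift_disj_right (q : Bool) (A : Form L n) (B : Form L (n + 1)) :
    LogEquiv (A.disj (B.quant q)) ((A.lift.disj B).quant q) := by
  intro I ρ
  cases q <;> simp only [Form.quant, val_disj, val_all, val_ex, val_lift]
  · exact Monotone.map_ciSup_of_continuousAt (f := max (A.val I ρ)) (by fun_prop)
      (monotone_const.max monotone_id) (bddAbove_range_val I B ρ)
  · exact (Monotone.ciInf_comp_of_isLeast (g := max (A.val I ρ))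
      (monotone_const.max monotone_id) (isLeast_range_val I B ρ)).symm

lemma shift_impl_left (q : Bool) (A : Form L (n + 1)) (B : Form L n) :
    LogEquiv ((A.quant q).impl B) ((A.impl B.lift).quant !q) := by
  intro I ρ
  cases q <;>
    simp only [Form.quant, Bool.not_false, Bool.not_true, val_impl, val_all, val_ex, val_lift]
  · exact (ciInf_godelImp_const (bddAbove_range_val I A ρ) (B.val_le_one I ρ)).symm
  · exact (Antitone.ciSup_comp_of_isLeast (godelImp_antitone_left (B.val_le_one I ρ))
      (isLeast_range_val I A ρ)).symm

lemma shift_impl_right (q : Bool) (A : Form L n) (B : Form L (n + 1)) :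
    LogEquiv (A.impl (B.quant q)) ((A.lift.impl B).quant q) := by
  intro I ρ
  cases q <;> simp only [Form.quant, val_impl, val_all, val_ex, val_lift]
  · exact (ciSup_const_godelImp (A.val_le_one I ρ) (fun _ => B.val_le_one I _)
      (isGreatest_range_val_or_eq_one I B ρ)).symm
  · exact (Monotone.ciInf_comp_of_isLeast (godelImp_monotone_right (A.val_le_one I ρ))
      (isLeast_range_val I B ρ)).symm

def HasPrenexForm (A : Form L n) : Prop :=
  ∃ P : Form L n, IsPrenex P ∧ DeltaFree P ∧ LogEquiv A P

lemma HasPrenexForm.of_logEquiv {A B : Form L n} (h : LogEquiv A B)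
    (hB : HasPrenexForm B) : HasPrenexForm A :=
  let ⟨P, hP, hdP, hBP⟩ := hB
  ⟨P, hP, hdP, h.trans hBP⟩

lemma HasPrenexForm.quant (q : Bool) {A : Form L (n + 1)} (hA : HasPrenexForm A) :
    HasPrenexForm (A.quant q) := by
  obtain ⟨P, hP, hdP, hAP⟩ := hA
  refine ⟨P.quant q, ?_, ?_, hAP.quant q⟩ <;> cases q
  exacts [.ex hP, .all hP, hdP, hdP]

structure PrenexConnective (op : ∀ {m : ℕ}, Form L m → Form L m → Form L m) : Prop where
  quantFree {m : ℕ} {A B : Form L m} : QuantFree A → QuantFree B → QuantFree (op A B)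
  deltaFree {m : ℕ} {A B : Form L m} : DeltaFree A → DeltaFree B → DeltaFree (op A B)
  congr {m : ℕ} {A A' B B' : Form L m} :
    LogEquiv A A' → LogEquiv B B' → LogEquiv (op A B) (op A' B')
  shift_left {m : ℕ} (q : Bool) (A : Form L (m + 1)) (B : Form L m) :
    ∃ q', LogEquiv (op (A.quant q) B) ((op A B.lift).quant q')
  shift_right {m : ℕ} (q : Bool) (A : Form L m) (B : Form L (m + 1)) :
    ∃ q', LogEquiv (op A (B.quant q)) ((op A.lift B).quant q')

namespace PrenexConnective

variable {op : ∀ {m : ℕ}, Form L m → Form L m → Form L m}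

lemma hasPrenexForm_of_quantFree (hop : PrenexConnective op) {m : ℕ} {B : Form L m}
    (hB : IsPrenex B) (hdB : DeltaFree B) :
    ∀ {A : Form L m}, QuantFree A → DeltaFree A → HasPrenexForm (op A B) := by
  induction hB with
  | qf hqB =>
    exact fun hA hdA => ⟨_, .qf (hop.quantFree hA hqB), hop.deltaFree hdA hdB, fun _ _ => rfl⟩
  | all _ ih =>
    intro A hA hdA
    obtain ⟨q', h⟩ := hop.shift_right true A _
    exact ((ih hdB (quantFree_rename _ hA) (deltaFree_rename _ hdA)).quant q').of_logEquiv h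
  | ex _ ih =>
    intro A hA hdA
    obtain ⟨q', h⟩ := hop.shift_right false A _
    exact ((ih hdB (quantFree_rename _ hA) (deltaFree_rename _ hdA)).quant q').of_logEquiv h

lemma hasPrenexForm_of_isPrenex (hop : PrenexConnective op) {m : ℕ} {A : Form L m}
    (hA : IsPrenex A) (hdA : DeltaFree A) :
    ∀ {B : Form L m}, IsPrenex B → DeltaFree B → HasPrenexForm (op A B) := by
  induction hA with
  | qf hqA => exact fun hB hdB => hop.hasPrenexForm_of_quantFree hB hdB hqA hdA
  | all _ ih =>
    intro B hB hdB
    obtain ⟨q', h⟩ := hop.shift_left true _ B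
    exact ((ih hdA (hB.rename _) (deltaFree_rename _ hdB)).quant q').of_logEquiv h
  | ex _ ih =>
    intro B hB hdB
    obtain ⟨q', h⟩ := hop.shift_left false _ B
    exact ((ih hdA (hB.rename _) (deltaFree_rename _ hdB)).quant q').of_logEquiv h

lemma hasPrenexForm (hop : PrenexConnective op) {m : ℕ} {A B : Form L m}
    (hA : HasPrenexForm A) (hB : HasPrenexForm B) : HasPrenexForm (op A B) := by
  obtain ⟨P, hP, hdP, hAP⟩ := hA
  obtain ⟨Q, hQ, hdQ, hBQ⟩ := hB
  exact (hop.hasPrenexForm_of_isPrenex hP hdP hQ hdQ).of_logEquiv (hop.congr hAP hBQ)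

end PrenexConnective

lemma prenexConnective_conj : PrenexConnective (L := L) conj where
  quantFree := And.intro
  deltaFree := And.intro
  congr h₁ h₂ I ρ := by simp only [val_conj, h₁ I ρ, h₂ I ρ]
  shift_left q A B := ⟨q, shift_conj_left q A B⟩
  shift_right q A B := ⟨q, shift_conj_right q A B⟩

lemma prenexConnective_disj : PrenexConnective (L := L) disj where
  quantFree := And.intro
  deltaFree := And.intro
  congr h₁ h₂ I ρ := by simp only [val_disj, h₁ I ρ, h₂ I ρ]
  shift_left q A B := ⟨q, shift_disj_left q A B⟩
  shift_right q A B := ⟨q, shift_disj_right q A B⟩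

lemma prenexConnective_impl : PrenexConnective (L := L) impl where
  quantFree := And.intro
  deltaFree := And.intro
  congr h₁ h₂ I ρ := by simp only [val_impl, h₁ I ρ, h₂ I ρ]
  shift_left q A B := ⟨!q, shift_impl_left q A B⟩
  shift_right q A B := ⟨q, shift_impl_right q A B⟩

lemma hasPrenexForm_of_deltaFree {A : Form L n} (hA : DeltaFree A) : HasPrenexForm A := by
  induction A with
  | falsum | atom => refine ⟨_, .qf ?_, ?_, fun _ _ => rfl⟩ <;> trivial
  | conj _ _ ihA ihB => exact prenexConnective_conj.hasPrenexForm (ihA hA.1) (ihB hA.2)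
  | disj _ _ ihA ihB => exact prenexConnective_disj.hasPrenexForm (ihA hA.1) (ihB hA.2)
  | impl _ _ ihA ihB => exact prenexConnective_impl.hasPrenexForm (ihA hA.1) (ihB hA.2)
  | delta => exact hA.elim
  | all _ ih => exact (ih hA).quant true
  | ex _ ih => exact (ih hA).quant false

end Form

/-- In `G_{V_↑}` every sentence has a logically equivalent
prenex sentence. -/
theorem stmt_11 {L : Lang} (A : Form L 0) (hA : DeltaFree A) :
    ∃ P : Form L 0, IsPrenex P ∧ DeltaFree P ∧
      ∀ I : Interp L Vup, Form.sval I A = Form.sval I P := by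
  obtain ⟨P, hP, hdP, hAP⟩ := Form.hasPrenexForm_of_deltaFree hA
  exact ⟨P, hP, hdP, fun I => hAP I Fin.elim0⟩

end GodelPaper
end

section
/- Let V be a Gödel set with no accumulation point from above (no x ∈ V is a limit of points of V strictly greater than x) that possesses an inner accumulation point from below, i.e., some x ∈ V with x < 1 that is a limit of points of V strictly less than x. Then not every sentence admits a logically equivalent prenex sentence in G_V: there is a sentence (in a language with a unary predicate A and a propositional atom X) for which no prenex sentence P satisfies I(F)=I(P) for all V-interpretations I. -/
namespace GodelPaper

/-!
Let `x₀ < 1` be an inner accumulation point from below of `V` and `D` the set of points of `V`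
below `x₀`. In the interpretation `I` with domain `D`, `P(d) = d` and `X = x₀`, the sentence
`X ⊃ ∃x P(x)` has value `1`, because `sup D = x₀`. Collapsing every atomic value `≥ x₀` to `1`
gives an interpretation `J` in which the same sentence has value `x₀`. The collapse commutes with
the Gödel connectives, so it commutes with quantifier-free formulas. All values of `I` lie in
`[0, x₀] ∪ {1}`, so a supremum equal to `1` is attained, and hence every prenex sentence with
value `1` under `I` still has value `1` under `J`.
-/

variable {L : Lang} {V : Set ℝ}

section Values

lemma Form.val_all_s12 (I : Interp L V) {n : ℕ} (A : Form L (n+1)) (ρ : Fin n → I.Dom) :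
    Form.val I (.all A) ρ = ⨅ d, Form.val I A (Fin.snoc ρ d) := by
  simp only [Form.val, iInf, Set.range, eq_comm]

lemma Form.val_ex_s12 (I : Interp L V) {n : ℕ} (A : Form L (n+1)) (ρ : Fin n → I.Dom) :
    Form.val I (.ex A) ρ = ⨆ d, Form.val I A (Fin.snoc ρ d) := by
  simp only [Form.val, iSup, Set.range, eq_comm]

lemma Form.val_mem_of_isClosed {S : Set ℝ} (hS : IsClosed S) (hS01 : S ⊆ Set.Icc 0 1)
    (h0 : (0:ℝ) ∈ S) (h1 : (1:ℝ) ∈ S) (I : Interp L V)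
    (hI : ∀ {k : ℕ} (R : L.Rel k) (d : Fin k → I.Dom), I.relVal R d ∈ S)
    {n : ℕ} (G : Form L n) (ρ : Fin n → I.Dom) : Form.val I G ρ ∈ S := by
  have := I.dom_nonempty
  induction G with
  | falsum => exact h0
  | atom R ts => exact hI R _
  | conj A B ihA ihB =>
    show min _ _ ∈ S
    rcases min_choice (Form.val I A ρ) (Form.val I B ρ) with h | h <;> rw [h]
    exacts [ihA ρ, ihB ρ]
  | disj A B ihA ihB =>
    show max _ _ ∈ S
    rcases max_choice (Form.val I A ρ) (Form.val I B ρ) with h | h <;> rw [h]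
    exacts [ihA ρ, ihB ρ]
  | impl A B ihA ihB => simp only [Form.val]; split <;> [exact h1; exact ihB ρ]
  | delta A ih => simp only [Form.val]; split <;> [exact h1; exact h0]
  | all A ih =>
    have hrange : Set.range (fun d => Form.val I A (Fin.snoc ρ d)) ⊆ S := by
      rintro _ ⟨d, rfl⟩; exact ih _
    rw [Form.val_all_s12]
    exact hS.closure_subset_iff.mpr hrange <| csInf_mem_closure (Set.range_nonempty _)
      ⟨0, fun _ ht => (hS01 (hrange ht)).1⟩
  | ex A ih =>
    have hrange : Set.range (fun d => Form.val I A (Fin.snoc ρ d)) ⊆ S := by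
      rintro _ ⟨d, rfl⟩; exact ih _
    rw [Form.val_ex_s12]
    exact hS.closure_subset_iff.mpr hrange <| csSup_mem_closure (Set.range_nonempty _)
      ⟨1, fun _ ht => (hS01 (hrange ht)).2⟩

lemma Form.val_mem_Icc (hV : V ⊆ Set.Icc 0 1) (I : Interp L V) {n : ℕ} (G : Form L n)
    (ρ : Fin n → I.Dom) : Form.val I G ρ ∈ Set.Icc (0:ℝ) 1 :=
  Form.val_mem_of_isClosed isClosed_Icc le_rfl (by norm_num) (by norm_num) I
    (fun R d => hV (I.relVal_mem R d)) G ρ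

end Values

section Collapse

noncomputable def collapseAbove (a t : ℝ) : ℝ := if a ≤ t then 1 else t

lemma collapseAbove_monotone {a : ℝ} (ha : a ≤ 1) : Monotone (collapseAbove a) := by
  intro s t hst
  unfold collapseAbove
  split_ifs <;> linarith

lemma collapseAbove_of_le {a t : ℝ} (h : a ≤ t) : collapseAbove a t = 1 := if_pos h

lemma collapseAbove_of_lt {a t : ℝ} (h : t < a) : collapseAbove a t = t := if_neg (not_le.mpr h)

lemma collapseAbove_himp {a : ℝ} (ha : a ≤ 1) (s t : ℝ) :
    collapseAbove a (if s ≤ t then 1 else t) =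
      if collapseAbove a s ≤ collapseAbove a t then 1 else collapseAbove a t := by
  unfold collapseAbove
  split_ifs <;> linarith

@[reducible] noncomputable def Interp.collapse (I : Interp L V) (a : ℝ) (h1 : (1:ℝ) ∈ V) :
    Interp L V where
  Dom := I.Dom
  dom_nonempty := I.dom_nonempty
  funMap := I.funMap
  relVal R d := collapseAbove a (I.relVal R d)
  relVal_mem R d := by
    unfold collapseAbove
    split
    exacts [h1, I.relVal_mem R d]

lemma Term.eval_collapse (I : Interp L V) (a : ℝ) (h1 : (1:ℝ) ∈ V) {α : Type}
    (ρ : α → I.Dom) (t : Term L α) : Term.eval (I.collapse a h1) ρ t = Term.eval I ρ t := by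
  induction t with
  | var i => rfl
  | func f ts ih => exact congrArg (I.funMap f) (funext ih)

variable {a : ℝ} (I : Interp L V) (h1 : (1:ℝ) ∈ V)

lemma Form.val_collapse_of_quantFree (ha0 : 0 < a) (ha1 : a ≤ 1) {n : ℕ} {G : Form L n}
    (hq : QuantFree G) (hΔ : DeltaFree G) (ρ : Fin n → I.Dom) :
    Form.val (I.collapse a h1) G ρ = collapseAbove a (Form.val I G ρ) := by
  induction G with
  | falsum => exact (collapseAbove_of_lt ha0).symm
  | atom R ts => simp only [Form.val, Term.eval_collapse]
  | conj A B ihA ihB =>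
    simp only [Form.val, ihA hq.1 hΔ.1, ihB hq.2 hΔ.2, (collapseAbove_monotone ha1).map_min]
  | disj A B ihA ihB =>
    simp only [Form.val, ihA hq.1 hΔ.1, ihB hq.2 hΔ.2, (collapseAbove_monotone ha1).map_max]
  | impl A B ihA ihB =>
    simp only [Form.val, ihA hq.1 hΔ.1, ihB hq.2 hΔ.2, collapseAbove_himp ha1]
  | delta A ih => exact hΔ.elim
  | all A ih => exact hq.elim
  | ex A ih => exact hq.elim

lemma Form.val_le_or_eq_one (hV : V ⊆ Set.Icc 0 1) (ha0 : 0 ≤ a) (ha1 : a ≤ 1)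
    (hgap : ∀ {k : ℕ} (R : L.Rel k) (d : Fin k → I.Dom), I.relVal R d ≤ a ∨ I.relVal R d = 1)
    {n : ℕ} (G : Form L n) (ρ : Fin n → I.Dom) : Form.val I G ρ ≤ a ∨ Form.val I G ρ = 1 := by
  have hS : ∀ {k : ℕ} (R : L.Rel k) (d : Fin k → I.Dom), I.relVal R d ∈ Set.Icc 0 a ∪ {1} :=
    fun R d => (hgap R d).imp (⟨(hV (I.relVal_mem R d)).1, ·⟩) id
  have hS01 : Set.Icc 0 a ∪ {1} ⊆ Set.Icc (0:ℝ) 1 :=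
    Set.union_subset (Set.Icc_subset_Icc_right ha1) (by norm_num)
  exact (Form.val_mem_of_isClosed (isClosed_Icc.union isClosed_singleton) hS01
    (Or.inl ⟨le_rfl, ha0⟩) (Or.inr rfl) I hS G ρ).imp (·.2) id

lemma Form.val_collapse_eq_one_of_isPrenex (hV : V ⊆ Set.Icc 0 1) (ha0 : 0 < a) (ha1 : a < 1)
    (hgap : ∀ {k : ℕ} (R : L.Rel k) (d : Fin k → I.Dom), I.relVal R d ≤ a ∨ I.relVal R d = 1)
    {n : ℕ} {Q : Form L n} (hQ : IsPrenex Q) (hΔ : DeltaFree Q) {ρ : Fin n → I.Dom}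
    (h : Form.val I Q ρ = 1) : Form.val (I.collapse a h1) Q ρ = 1 := by
  have := I.dom_nonempty
  induction hQ with
  | qf hq =>
    rw [Form.val_collapse_of_quantFree I h1 ha0 ha1.le hq hΔ, h]
    exact if_pos ha1.le
  | @all m A _ ih =>
    rw [Form.val_all_s12] at h ⊢
    have hbdd : BddBelow (Set.range fun d => Form.val I A (Fin.snoc ρ d)) :=
      ⟨0, by rintro _ ⟨d, rfl⟩; exact (Form.val_mem_Icc hV I A _).1⟩
    have hA : ∀ d, Form.val I A (Fin.snoc ρ d) = 1 := fun d =>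
      le_antisymm (Form.val_mem_Icc hV I A _).2 (h ▸ ciInf_le hbdd d)
    simp only [fun d => ih hΔ (hA d)]
    exact ciInf_const
  | @ex m A _ ih =>
    rw [Form.val_ex_s12] at h ⊢
    obtain ⟨d, hd⟩ : ∃ d, Form.val I A (Fin.snoc ρ d) = 1 := by
      by_contra! hne
      have : (⨆ d, Form.val I A (Fin.snoc ρ d)) ≤ a := ciSup_le fun d =>
        (Form.val_le_or_eq_one I hV ha0.le ha1.le hgap A _).resolve_right (hne d)
      linarith
    have hbdd : BddAbove (Set.range fun d => Form.val (I.collapse a h1) A (Fin.snoc ρ d)) :=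
      ⟨1, by rintro _ ⟨d, rfl⟩; exact (Form.val_mem_Icc hV _ A _).2⟩
    exact le_antisymm (ciSup_le fun _ => (Form.val_mem_Icc hV _ A _).2)
      (ih hΔ hd ▸ le_ciSup hbdd d)

end Collapse

section Witness

variable (P : L.Rel 1) (X : L.Rel 0)

def atomImpExists : Form L 0 := Form.impl (atom0 X) (Form.ex (atom1 P (Term.var 0)))

lemma sval_atomImpExists (K : Interp L V) :
    Form.sval K (atomImpExists P X) =
      if K.relVal X Fin.elim0 ≤ ⨆ d, K.relVal P (fun _ => d) then 1
      else ⨆ d, K.relVal P (fun _ => d) := by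
  have hX : Form.val K (atom0 X) Fin.elim0 = K.relVal X Fin.elim0 :=
    congrArg (K.relVal X) (funext (·.elim0))
  have hP : Form.val K (Form.ex (atom1 P (Term.var 0))) Fin.elim0 =
      ⨆ d, K.relVal P (fun _ => d) := by
    rw [Form.val_ex_s12]; rfl
  rw [Form.sval, atomImpExists, Form.val, hX, hP]

open Classical in
noncomputable def predAtomVal (D : Set ℝ) (w : ℝ) : ∀ {k : ℕ}, L.Rel k → (Fin k → D) → ℝ
  | 0, R, _ => if R = X then w else 1
  | 1, R, d => if R = P then d 0 else 1
  | _ + 2, _, _ => 1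

lemma predAtomVal_eq_or_mem_or_eq_one (D : Set ℝ) (w : ℝ) {k : ℕ} (R : L.Rel k)
    (d : Fin k → D) :
    predAtomVal P X D w R d = w ∨ predAtomVal P X D w R d ∈ D ∨ predAtomVal P X D w R d = 1 := by
  match k, R, d with
  | 0, R, _ => simp only [predAtomVal]; split_ifs <;> simp
  | 1, R, d => simp only [predAtomVal]; split_ifs <;> simp
  | _ + 2, _, _ => exact Or.inr (Or.inr rfl)

@[reducible] noncomputable def predModel (D : Set ℝ) [Nonempty D] (hD : D ⊆ V) (w : ℝ)
    (hw : w ∈ V) (h1 : (1:ℝ) ∈ V) : Interp L V where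
  Dom := D
  dom_nonempty := inferInstance
  funMap _ _ := Classical.arbitrary D
  relVal := predAtomVal P X D w
  relVal_mem R d := by
    rcases predAtomVal_eq_or_mem_or_eq_one P X D w R d with h | h | h
    · rw [h]; exact hw
    · exact hD h
    · rw [h]; exact h1

end Witness

theorem ciSup_inter_Iio_eq {V : Set ℝ} {x : ℝ} [Nonempty ↥(V ∩ Set.Iio x)]
    (hx : ∀ ε > 0, (V ∩ Set.Ioo (x - ε) x).Nonempty) : ⨆ d : ↥(V ∩ Set.Iio x), (d : ℝ) = x := by
  refine IsLUB.ciSup_eq ?_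
  rw [Subtype.range_coe]
  refine isLUB_of_mem_closure (fun _ h => h.2.le) (Metric.mem_closure_iff.2 fun ε hε => ?_)
  obtain ⟨y, hyV, hy, hyx⟩ := hx ε hε
  exact ⟨y, ⟨hyV, hyx⟩, by rw [Real.dist_eq, abs_of_pos (by linarith)]; linarith⟩

theorem stmt_12_general {L : Lang} {V : Set ℝ} (hV : GodelSet V)
    (hinner : ∃ x ∈ V, x < 1 ∧ ∀ ε > (0:ℝ), (V ∩ Set.Ioo (x - ε) x).Nonempty)
    (P : L.Rel 1) (X : L.Rel 0) :
    ∃ F : Form L 0, DeltaFree F ∧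
      ¬ ∃ Q : Form L 0, IsPrenex Q ∧ DeltaFree Q ∧
          ∀ I : Interp L V, Form.sval I F = Form.sval I Q := by
  obtain ⟨-, hV01, -, h1⟩ := hV
  obtain ⟨x₀, hx₀V, hx₀1, hacc⟩ := hinner
  obtain ⟨y, hyV, -, hyx₀⟩ := hacc 1 one_pos
  have : Nonempty ↥(V ∩ Set.Iio x₀) := ⟨⟨y, hyV, hyx₀⟩⟩
  have hx₀0 : 0 < x₀ := (hV01 hyV).1.trans_lt hyx₀
  have hsup := ciSup_inter_Iio_eq hacc
  let I := predModel P X (V ∩ Set.Iio x₀) Set.inter_subset_left x₀ hx₀V h1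
  have hX : I.relVal X Fin.elim0 = x₀ := by simp [I, predAtomVal]
  have hP : ∀ d : ↥(V ∩ Set.Iio x₀), I.relVal P (fun _ => d) = d := by
    simp [I, predAtomVal]
  have hgap : ∀ {k : ℕ} (R : L.Rel k) d, I.relVal R d ≤ x₀ ∨ I.relVal R d = 1 := fun R d =>
    (predAtomVal_eq_or_mem_or_eq_one P X _ x₀ R d).elim (Or.inl ·.le) (·.imp (·.2.le) id)
  refine ⟨atomImpExists P X, ⟨trivial, trivial⟩, ?_⟩
  rintro ⟨Q, hQ, hΔ, hFQ⟩
  have hIQ : Form.sval I Q = 1 := by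
    simp only [← hFQ, sval_atomImpExists, hX, hP]
    exact if_pos hsup.ge
  have hJF : Form.sval (I.collapse x₀ h1) (atomImpExists P X) = x₀ := by
    simp only [sval_atomImpExists, hX, hP, collapseAbove_of_le le_rfl,
      fun d : ↥(V ∩ Set.Iio x₀) => collapseAbove_of_lt d.2.2]
    exact (if_neg (not_le.mpr (hsup.trans_lt hx₀1))).trans hsup
  have hJQ := Form.val_collapse_eq_one_of_isPrenex I h1 hV01 hx₀0 hx₀1 hgap hQ hΔ hIQ
  exact hx₀1.ne (hJF.symm.trans ((hFQ _).trans hJQ))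

/-- If the Gödel set `V` has no accumulation point from above
but has an inner accumulation point from below (some `x ∈ V`, `x < 1`, which
is a limit of points of `V` strictly less than `x`), then not every sentence
admits a logically equivalent prenex sentence in `G_V`: in a language with a
unary predicate `P` and a propositional atom `X` there is a sentence with no
prenex equivalent. -/
theorem stmt_12 {L : Lang} {V : Set ℝ} (hV : GodelSet V)
    (hnoabove : ∀ x ∈ V, ∃ ε > (0:ℝ), V ∩ Set.Ioo x (x + ε) = ∅)
    (hinner : ∃ x ∈ V, x < 1 ∧ ∀ ε > (0:ℝ), (V ∩ Set.Ioo (x - ε) x).Nonempty)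
    (P : L.Rel 1) (X : L.Rel 0) :
    ∃ F : Form L 0, DeltaFree F ∧
      ¬ ∃ Q : Form L 0, IsPrenex Q ∧ DeltaFree Q ∧
          ∀ I : Interp L V, Form.sval I F = Form.sval I Q :=
  stmt_12_general hV hinner P X

end GodelPaper
end
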